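/- (Sign of the mixed second derivative at the boundary.) Let n = 2 and let u be a convex function, C² up to the boundary in a neighbourhood of a boundary arc {(t, ρ(t))} of Ω ⊂ {x₂ > ρ(x₁)}, with D²u positive definite there, where ρ and ρ* are C¹ functions and the boundary relation ∂₁u(t, ρ(t)) = ρ*(∂₂u(t, ρ(t))) holds identically in t along the arc. If at a point p = (t, ρ(t)) one has ρ'(t) > 0 and (ρ*)'(∂₂u(p)) < 0, then ∂₁∂₂u(p) < 0. -/

import Mathlib

open MeasureTheory Set Filter
open scoped ENNReal Topology

noncomputable section

/-- The partial derivative `∂ᵢ g` of a function `g : ℝⁿ → ℝ`. -/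
def pd {n : ℕ} (i : Fin n) (g : EuclideanSpace ℝ (Fin n) → ℝ)
    (x : EuclideanSpace ℝ (Fin n)) : ℝ :=
  fderiv ℝ g x (EuclideanSpace.single i 1)

/-- The point `(a, b) ∈ ℝ²`. -/
def pt2 (a b : ℝ) : EuclideanSpace ℝ (Fin 2) :=
  a • EuclideanSpace.single (0 : Fin 2) (1 : ℝ) + b • EuclideanSpace.single (1 : Fin 2) (1 : ℝ)

/-!
Differentiate the boundary relation along the arc `s ↦ (s, ρ(s))`. With `A = ∂₁₁u`,
`B = ∂₁₂u = ∂₂₁u`, `C = ∂₂₂u` at `p` this gives `A + ρ' B = (ρ*)' (B + ρ' C)`. Since `A, C > 0`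
by positive definiteness, `B ≥ 0` would make the left side positive and the right side negative.
-/

lemma neg_of_mixed_relation {A B C r k : ℝ} (hA : 0 < A) (hC : 0 < C) (hr : 0 < r) (hk : k < 0)
    (hrel : A + r * B = k * (B + r * C)) : B < 0 := by
  by_contra! hB
  have hlhs : 0 < A + r * B := by positivity
  have hrhs : k * (B + r * C) < 0 := mul_neg_of_neg_of_pos hk (by positivity)
  linarith

section SecondPartials

variable {n : ℕ} {u : EuclideanSpace ℝ (Fin n) → ℝ} {x : EuclideanSpace ℝ (Fin n)}

lemma hasFDerivAt_pd (hu : ContDiffAt ℝ 2 u x) (j : Fin n) :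
    HasFDerivAt (pd j u)
      ((ContinuousLinearMap.apply ℝ ℝ (EuclideanSpace.single j (1 : ℝ))).comp
        (fderiv ℝ (fderiv ℝ u) x)) x :=
  (ContinuousLinearMap.apply ℝ ℝ (EuclideanSpace.single j (1 : ℝ))).hasFDerivAt.comp x
    ((hu.fderiv_right (m := 1) (by norm_num)).differentiableAt one_ne_zero).hasFDerivAt

lemma pd_pd_eq_fderiv_fderiv (hu : ContDiffAt ℝ 2 u x) (i j : Fin n) :
    pd i (pd j u) x
      = fderiv ℝ (fderiv ℝ u) x (EuclideanSpace.single i 1) (EuclideanSpace.single j 1) := by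
  rw [pd, (hasFDerivAt_pd hu j).fderiv]
  rfl

lemma pd_pd_comm (hu : ContDiffAt ℝ 2 u x) (i j : Fin n) :
    pd i (pd j u) x = pd j (pd i u) x := by
  rw [pd_pd_eq_fderiv_fderiv hu, pd_pd_eq_fderiv_fderiv hu,
    hu.isSymmSndFDerivAt (by simp [minSmoothness_of_isRCLikeNormedField])]

end SecondPartials

lemma hasDerivAt_pt2_graph {ρ : ℝ → ℝ} {t : ℝ} (hρ : DifferentiableAt ℝ ρ t) :
    HasDerivAt (fun s => pt2 s (ρ s))
      (EuclideanSpace.single 0 1 + deriv ρ t • EuclideanSpace.single 1 1) t := by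
  have h := ((hasDerivAt_id t).smul_const (EuclideanSpace.single (0 : Fin 2) (1 : ℝ))).add
    (hρ.hasDerivAt.smul_const (EuclideanSpace.single (1 : Fin 2) (1 : ℝ)))
  rw [one_smul] at h
  exact h

lemma hasDerivAt_comp_pt2_graph {g : EuclideanSpace ℝ (Fin 2) → ℝ} {ρ : ℝ → ℝ} {t : ℝ}
    (hg : DifferentiableAt ℝ g (pt2 t (ρ t))) (hρ : DifferentiableAt ℝ ρ t) :
    HasDerivAt (fun s => g (pt2 s (ρ s)))
      (pd 0 g (pt2 t (ρ t)) + deriv ρ t * pd 1 g (pt2 t (ρ t))) t := by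
  have h := hg.hasFDerivAt.comp_hasDerivAt t (hasDerivAt_pt2_graph hρ)
  rwa [map_add, map_smul, smul_eq_mul] at h

theorem statement13_general (u : EuclideanSpace ℝ (Fin 2) → ℝ) (ρ ρstar : ℝ → ℝ)
    (hρ : ContDiff ℝ 1 ρ) (hρs : ContDiff ℝ 1 ρstar)
    (U : Set (EuclideanSpace ℝ (Fin 2))) (hU : IsOpen U)
    (hu : ContDiffOn ℝ 2 u U)
    (a b : ℝ)
    (harc : ∀ t ∈ Ioo a b, pt2 t (ρ t) ∈ U)
    (hpos : ∀ t ∈ Ioo a b,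
      (Matrix.of fun i j : Fin 2 => pd i (pd j u) (pt2 t (ρ t))).PosDef)
    (hbdry : ∀ t ∈ Ioo a b, pd 0 u (pt2 t (ρ t)) = ρstar (pd 1 u (pt2 t (ρ t))))
    (t : ℝ) (ht : t ∈ Ioo a b)
    (hρ' : 0 < deriv ρ t)
    (hρs' : deriv ρstar (pd 1 u (pt2 t (ρ t))) < 0) :
    pd 0 (pd 1 u) (pt2 t (ρ t)) < 0 := by
  set p := pt2 t (ρ t)
  have hC2 : ContDiffAt ℝ 2 u p := hu.contDiffAt (hU.mem_nhds (harc t ht))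
  have hdρ : DifferentiableAt ℝ ρ t := hρ.differentiable one_ne_zero t
  have hd_pd (j : Fin 2) : DifferentiableAt ℝ (pd j u) p := (hasFDerivAt_pd hC2 j).differentiableAt
  have hrel : pd 0 (pd 0 u) p + deriv ρ t * pd 1 (pd 0 u) p
      = deriv ρstar (pd 1 u p) * (pd 0 (pd 1 u) p + deriv ρ t * pd 1 (pd 1 u) p) := by
    have hbdry_near : (fun s => pd 0 u (pt2 s (ρ s)))
        =ᶠ[𝓝 t] fun s => ρstar (pd 1 u (pt2 s (ρ s))) :=
      eventually_of_mem (isOpen_Ioo.mem_nhds ht) hbdry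
    refine ((hasDerivAt_comp_pt2_graph (hd_pd 0) hdρ).congr_of_eventuallyEq
      hbdry_near.symm).unique ?_
    exact (hρs.differentiable one_ne_zero _).hasDerivAt.comp t
      (hasDerivAt_comp_pt2_graph (hd_pd 1) hdρ)
  rw [pd_pd_comm hC2 1 0] at hrel
  exact neg_of_mixed_relation (hpos t ht).diag_pos (hpos t ht).diag_pos hρ' hρs' hrel

/-- Lemma 5.5 / proof of Lemma 4.8: for a convex function `u` of two
variables which is `C²` up to a boundary arc `{x₂ = ρ(x₁)}` with positive definite
Hessian, satisfying the boundary relation `∂₁u(t, ρ(t)) = ρ*(∂₂u(t, ρ(t)))` along the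
arc, at any arc point where `ρ' > 0` and `(ρ*)' < 0` one has `∂₁∂₂u < 0`. -/
theorem statement13 (u : EuclideanSpace ℝ (Fin 2) → ℝ) (ρ ρstar : ℝ → ℝ)
    (hρ : ContDiff ℝ 1 ρ) (hρs : ContDiff ℝ 1 ρstar)
    (U : Set (EuclideanSpace ℝ (Fin 2))) (hU : IsOpen U) (hUconv : Convex ℝ U)
    (hconv : ConvexOn ℝ U u) (hu : ContDiffOn ℝ 2 u U)
    (a b : ℝ)
    (harc : ∀ t ∈ Ioo a b, pt2 t (ρ t) ∈ U)
    (hpos : ∀ t ∈ Ioo a b,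
      (Matrix.of fun i j : Fin 2 => pd i (pd j u) (pt2 t (ρ t))).PosDef)
    (hbdry : ∀ t ∈ Ioo a b, pd 0 u (pt2 t (ρ t)) = ρstar (pd 1 u (pt2 t (ρ t))))
    (t : ℝ) (ht : t ∈ Ioo a b)
    (hρ' : 0 < deriv ρ t)
    (hρs' : deriv ρstar (pd 1 u (pt2 t (ρ t))) < 0) :
    pd 0 (pd 1 u) (pt2 t (ρ t)) < 0 :=
  statement13_general u ρ ρstar hρ hρs U hU hu a b harc hpos hbdry t ht hρ' hρs'
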